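/- Let (m_n)_{n ≥ 0} be the Thue–Morse sequence with values 0 and 1, defined by m_n = (sum of the binary digits of n) mod 2, viewed as a real sequence. Then: (i) the frequencies of length-2 blocks exist and satisfy F₀₀ = F₁₁ = 1/6 and F₀₁ = F₁₀ = 1/3, i.e., #{i < N : m_i = m_{i+1} = 0}/N → 1/6, #{i < N : m_i = m_{i+1} = 1}/N → 1/6, #{i < N : m_i = 0, m_{i+1} = 1}/N → 1/3, #{i < N : m_i = 1, m_{i+1} = 0}/N → 1/3; (ii) the inconstancy of the sequence exists and equals ℐ((m_n)) = (1 + 2√2)/3. -/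

import Mathlib

noncomputable section
open MeasureTheory Real Set Filter
open scoped ENNReal

/-- The point `(x, y)` of the Euclidean plane. -/
def pt (x y : ℝ) : EuclideanSpace ℝ (Fin 2) := WithLp.toLp 2 ![x, y]

/-- The polygonal curve `Γ_N` through `(0,u₀), (1,u₁), …, (N,u_N)`: the union of the
segments joining `(i, u_i)` to `(i+1, u_{i+1})` for `i = 0, …, N−1`. -/
def polyCurve (u : ℕ → ℝ) (N : ℕ) : Set (EuclideanSpace ℝ (Fin 2)) :=
  ⋃ i ∈ Finset.range N, segment ℝ (pt i (u i)) (pt (i + 1) (u (i + 1)))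

/-- The length `ℓ(Γ_N) = Σ_{i<N} √(1 + (u_{i+1} − u_i)²)` of the polygonal curve. -/
def polyLength (u : ℕ → ℝ) (N : ℕ) : ℝ :=
  ∑ i ∈ Finset.range N, Real.sqrt (1 + (u (i + 1) - u i) ^ 2)

/-- The perimeter `δ(Γ_N)` of the convex hull of the polygonal curve: the
one-dimensional Hausdorff measure of the frontier of the convex hull. -/
def polyDelta (u : ℕ → ℝ) (N : ℕ) : ℝ :=
  (μH[1] (frontier (convexHull ℝ (polyCurve u N)))).toReal

/-- The inconstancy `ℐ(Γ_N) := 2 ℓ(Γ_N) / δ(Γ_N)` of the polygonal curve. -/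
def polyIncon (u : ℕ → ℝ) (N : ℕ) : ℝ :=
  2 * polyLength u N / polyDelta u N

/-- The number of indices `0 ≤ i < N` with `u_i = j` and `u_{i+1} = j'`. -/
def blockCount (u : ℕ → ℝ) (N : ℕ) (j j' : ℝ) : ℕ :=
  ((Finset.range N).filter fun i => u i = j ∧ u (i + 1) = j').card

/-- The Thue–Morse sequence with values `0` and `1`, viewed as a real sequence:
`m_n` is the sum of the binary digits of `n`, modulo `2`. -/
def thueMorse (n : ℕ) : ℝ := ((Nat.digits 2 n).sum % 2 : ℕ)

/-!
For a `0`/`1`-valued sequence `u`, the indicator of each length-2 block at position `i`, and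
the length `√(1 + (u (i+1) - u i)²)` of the `i`-th edge of `Γ_N`, are affine functions of `u i`,
`u (i+1) - u i` and `(u (i+1) - u i)²`. So the block frequencies and `ℓ(Γ_N) / N` only depend on
the density of ones and the density of changes `u i ≠ u (i+1)`. For Thue–Morse,
`m_{2n} + m_{2n+1} = 1` gives density `1/2` of ones, and since `m_{2n} ≠ m_{2n+1}` while
`m_{2n+1} ≠ m_{2n+2}` iff `m_n = m_{n+1}`, the number `c(N)` of changes before `N` satisfies
`c(N) + c(⌊N/2⌋) = N`, whence `c(N) = 2N/3 + O(log N)`.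

The convex hull of `Γ_N` is the trapezoid with vertices `(0,0)`, `(1,1)`, `(a,1)`, `(b,0)`,
where `a` and `b` are the last positions `≤ N` of a `1` and of a `0`. Its frontier lies in the
four edges and contains the two horizontal ones, so its perimeter is `a + b + O(1)`. Thue–Morse
has no three equal consecutive terms, so `a, b ≥ N - 2` and `δ(Γ_N) = 2N + O(1)`.
-/

open Topology

local notation "ℝ²" => EuclideanSpace ℝ (Fin 2)

theorem tendsto_div_of_abs_sub_le {x g : ℕ → ℝ} {α : ℝ}
    (h : ∀ᶠ N in atTop, |x N - α * N| ≤ g N) (hg : Tendsto (fun N => g N / N) atTop (𝓝 0)) :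
    Tendsto (fun N => x N / N) atTop (𝓝 α) := by
  rw [tendsto_iff_norm_sub_tendsto_zero]
  refine squeeze_zero' (.of_forall fun N => norm_nonneg _) ?_ hg
  filter_upwards [h, eventually_gt_atTop 0] with N hN hN0
  have hN0 : (0 : ℝ) < N := Nat.cast_pos.mpr hN0
  rw [Real.norm_eq_abs, div_sub' hN0.ne', abs_div, abs_of_pos hN0, mul_comm]
  exact div_le_div_of_nonneg_right hN hN0.le

theorem tendsto_natLog_add_one_div :
    Tendsto (fun N : ℕ => ((Nat.log 2 N : ℝ) + 1) / N) atTop (𝓝 0) := by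
  have hlog : Tendsto (fun N : ℕ => Real.log N / N / Real.log 2) atTop (𝓝 0) := by
    simpa using ((Real.isLittleO_log_id_atTop.comp_tendsto
      tendsto_natCast_atTop_atTop).tendsto_div_nhds_zero).div_const (Real.log 2)
  have hsum := hlog.add tendsto_one_div_atTop_nhds_zero_nat
  rw [add_zero] at hsum
  refine squeeze_zero (fun N => by positivity) (fun N => ?_) hsum
  have h := Real.natLog_le_logb N 2
  rw [Real.logb, Nat.cast_ofNat] at h
  rw [add_div, div_right_comm]
  gcongr

theorem abs_sub_le_natLog_of_add_div_two {x : ℕ → ℝ} (h : ∀ N, x N + x (N / 2) = N) (N : ℕ) :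
    |x N - 2 / 3 * N| ≤ ((Nat.log 2 N : ℝ) + 1) / 3 := by
  induction N using Nat.strong_induction_on with
  | _ N ih =>
  have h0 : x 0 = 0 := by simpa using h 0
  rcases Nat.lt_or_ge N 2 with hN | hN
  · interval_cases N
    · norm_num [h0]
    · have h1 := h 1
      norm_num [h0] at h1 ⊢
      norm_num [h1]
  · have ihN := ih (N / 2) (by omega)
    rw [Nat.log_div_base, Nat.cast_sub (Nat.log_pos one_lt_two hN), Nat.cast_one] at ihN
    have hle : (N : ℝ) ≤ 2 * ((N / 2 : ℕ) : ℝ) + 1 := by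
      exact_mod_cast (by omega : N ≤ 2 * (N / 2) + 1)
    have hge : 2 * ((N / 2 : ℕ) : ℝ) ≤ N := by exact_mod_cast Nat.mul_div_le N 2
    have hx := h N
    rw [abs_le] at ihN ⊢
    constructor <;> linarith [ihN.1, ihN.2]

theorem tendsto_div_of_add_div_two {x : ℕ → ℝ} (h : ∀ N, x N + x (N / 2) = N) :
    Tendsto (fun N => x N / N) atTop (𝓝 (2 / 3)) :=
  tendsto_div_of_abs_sub_le (.of_forall (abs_sub_le_natLog_of_add_div_two h))
    (by simpa [div_right_comm] using tendsto_natLog_add_one_div.div_const 3)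

/-- For a `0`/`1`-valued sequence, the number of `i < N` with `u i = 1`. -/
def onesCount (u : ℕ → ℝ) (N : ℕ) : ℝ := ∑ i ∈ Finset.range N, u i

/-- For a `0`/`1`-valued sequence, the number of `i < N` with `u i ≠ u (i + 1)`. -/
def changeCount (u : ℕ → ℝ) (N : ℕ) : ℝ := ∑ i ∈ Finset.range N, (u (i + 1) - u i) ^ 2

theorem blockCount_eq_sum (u : ℕ → ℝ) (N : ℕ) (j j' : ℝ) :
    (blockCount u N j j' : ℝ) =
      ∑ i ∈ Finset.range N, (if u i = j then 1 else 0) * (if u (i + 1) = j' then 1 else 0) := by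
  simp only [blockCount, Finset.natCast_card_filter, ite_zero_mul_ite_zero, mul_one]

theorem sum_range_affine (u : ℕ → ℝ) (N : ℕ) (a b c e : ℝ) :
    ∑ i ∈ Finset.range N, (a + b * u i + c * (u (i + 1) - u i) + e * (u (i + 1) - u i) ^ 2) =
      a * N + b * onesCount u N + c * (u N - u 0) + e * changeCount u N := by
  simp only [Finset.sum_add_distrib, ← Finset.mul_sum, Finset.sum_range_sub, Finset.sum_const,
    Finset.card_range, nsmul_eq_mul, onesCount, changeCount]
  ring

section Binary

variable {u : ℕ → ℝ} (hu : ∀ n, u n = 0 ∨ u n = 1)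
include hu

theorem polyLength_eq_of_binary (N : ℕ) :
    polyLength u N = N + (√2 - 1) * changeCount u N := by
  calc polyLength u N
      = ∑ i ∈ Finset.range N, (1 + 0 * u i + 0 * (u (i + 1) - u i) +
          (√2 - 1) * (u (i + 1) - u i) ^ 2) := by
        refine Finset.sum_congr rfl fun i _ => ?_
        rcases hu i with h | h <;> rcases hu (i + 1) with h' | h' <;> norm_num [h, h']
    _ = N + (√2 - 1) * changeCount u N := by rw [sum_range_affine]; ring

variable {d : ℝ} (hd : Tendsto (fun N => changeCount u N / N) atTop (𝓝 d))
include hd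

theorem tendsto_polyLength_div :
    Tendsto (fun N => polyLength u N / N) atTop (𝓝 (1 + (√2 - 1) * d)) := by
  refine ((hd.const_mul (√2 - 1)).const_add 1).congr' ?_
  filter_upwards [eventually_ne_atTop 0] with N hN
  rw [polyLength_eq_of_binary hu]
  field_simp

variable {s : ℝ} (hs : Tendsto (fun N => onesCount u N / N) atTop (𝓝 s))
include hs

theorem tendsto_blockCount_div {j j' a b c e : ℝ}
    (hf : ∀ x y : ℝ, (x = 0 ∨ x = 1) → (y = 0 ∨ y = 1) →
      (if x = j then 1 else 0) * (if y = j' then 1 else 0) =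
        a + b * x + c * (y - x) + e * (y - x) ^ 2) :
    Tendsto (fun N : ℕ => (blockCount u N j j' : ℝ) / N) atTop (𝓝 (a + b * s + e * d)) := by
  have hbdd : ∀ N, |u N - u 0| ≤ 1 := fun N => by
    rcases hu N with h | h <;> rcases hu 0 with h' | h' <;> norm_num [h, h']
  have hbdry : Tendsto (fun N : ℕ => (u N - u 0) / N) atTop (𝓝 0) :=
    tendsto_bdd_div_atTop_nhds_zero (.of_forall fun N => (abs_le.mp (hbdd N)).1)
      (.of_forall fun N => (abs_le.mp (hbdd N)).2) tendsto_natCast_atTop_atTop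
  have hlim := ((tendsto_const_nhds (x := a)).add (hs.const_mul b)).add
    ((hbdry.const_mul c).add (hd.const_mul e))
  rw [mul_zero, zero_add] at hlim
  refine hlim.congr' ?_
  filter_upwards [eventually_ne_atTop 0] with N hN
  rw [blockCount_eq_sum, Finset.sum_congr rfl fun i _ => hf _ _ (hu i) (hu (i + 1)),
    sum_range_affine]
  field_simp
  ring

theorem tendsto_blockCount_zero_zero :
    Tendsto (fun N : ℕ => (blockCount u N 0 0 : ℝ) / N) atTop (𝓝 (1 - s - d / 2)) := by
  convert tendsto_blockCount_div hu hd hs (j := 0) (j' := 0) (a := 1) (b := -1)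
    (c := -1 / 2) (e := -1 / 2)
    (fun x y hx hy => by rcases hx with rfl | rfl <;> rcases hy with rfl | rfl <;> norm_num)
    using 2
  ring

theorem tendsto_blockCount_one_one :
    Tendsto (fun N : ℕ => (blockCount u N 1 1 : ℝ) / N) atTop (𝓝 (s - d / 2)) := by
  convert tendsto_blockCount_div hu hd hs (j := 1) (j' := 1) (a := 0) (b := 1)
    (c := 1 / 2) (e := -1 / 2)
    (fun x y hx hy => by rcases hx with rfl | rfl <;> rcases hy with rfl | rfl <;> norm_num)
    using 2
  ring

theorem tendsto_blockCount_zero_one :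
    Tendsto (fun N : ℕ => (blockCount u N 0 1 : ℝ) / N) atTop (𝓝 (d / 2)) := by
  convert tendsto_blockCount_div hu hd hs (j := 0) (j' := 1) (a := 0) (b := 0)
    (c := 1 / 2) (e := 1 / 2)
    (fun x y hx hy => by rcases hx with rfl | rfl <;> rcases hy with rfl | rfl <;> norm_num)
    using 2
  ring

theorem tendsto_blockCount_one_zero :
    Tendsto (fun N : ℕ => (blockCount u N 1 0 : ℝ) / N) atTop (𝓝 (d / 2)) := by
  convert tendsto_blockCount_div hu hd hs (j := 1) (j' := 0) (a := 0) (b := 0)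
    (c := -1 / 2) (e := 1 / 2)
    (fun x y hx hy => by rcases hx with rfl | rfl <;> rcases hy with rfl | rfl <;> norm_num)
    using 2
  ring

end Binary

@[simp] theorem pt_apply_zero (x y : ℝ) : pt x y 0 = x := rfl

@[simp] theorem pt_apply_one (x y : ℝ) : pt x y 1 = y := rfl

theorem eq_pt (p : ℝ²) : p = pt (p 0) (p 1) := by
  ext i
  fin_cases i <;> rfl

theorem lineMap_pt (x₁ y₁ x₂ y₂ t : ℝ) :
    AffineMap.lineMap (pt x₁ y₁) (pt x₂ y₂) t = pt (x₁ + t * (x₂ - x₁)) (y₁ + t * (y₂ - y₁)) := by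
  ext i
  fin_cases i <;> simp [AffineMap.lineMap_apply] <;> ring

theorem mem_segment_pt {x₁ y₁ x₂ y₂ t : ℝ} {p : ℝ²} (ht : t ∈ Icc (0 : ℝ) 1)
    (hx : p 0 = x₁ + t * (x₂ - x₁)) (hy : p 1 = y₁ + t * (y₂ - y₁)) :
    p ∈ segment ℝ (pt x₁ y₁) (pt x₂ y₂) := by
  rw [segment_eq_image_lineMap]
  exact ⟨t, ht, by rw [lineMap_pt, eq_pt p, hx, hy]⟩

theorem mem_segment_pt_of_apply_one_eq {x₁ x₂ y : ℝ} {p : ℝ²} (hx : p 0 ∈ Icc x₁ x₂)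
    (hy : p 1 = y) : p ∈ segment ℝ (pt x₁ y) (pt x₂ y) := by
  have h := mem_image_of_mem (AffineMap.lineMap (pt 0 y) (pt 1 y) : ℝ →ᵃ[ℝ] ℝ²)
    (segment_eq_Icc (hx.1.trans hx.2) ▸ hx)
  rw [image_segment] at h
  simp only [lineMap_pt, sub_zero, mul_one, zero_add, sub_self, mul_zero, add_zero] at h
  rwa [eq_pt p, hy]

theorem apply_one_eq_of_mem_segment {x₁ x₂ y : ℝ} {p : ℝ²}
    (hp : p ∈ segment ℝ (pt x₁ y) (pt x₂ y)) : p 1 = y := by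
  rw [segment_eq_image_lineMap] at hp
  obtain ⟨t, -, rfl⟩ := hp
  simp [lineMap_pt]

theorem dist_pt (x₁ y₁ x₂ y₂ : ℝ) :
    dist (pt x₁ y₁) (pt x₂ y₂) = √((x₁ - x₂) ^ 2 + (y₁ - y₂) ^ 2) := by
  simp [EuclideanSpace.dist_eq, Fin.sum_univ_two, Real.dist_eq, sq_abs]

theorem dist_pt_le (x₁ y₁ x₂ y₂ : ℝ) :
    dist (pt x₁ y₁) (pt x₂ y₂) ≤ |x₁ - x₂| + |y₁ - y₂| := by
  rw [dist_pt, Real.sqrt_le_iff]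
  refine ⟨by positivity, ?_⟩
  nlinarith [sq_abs (x₁ - x₂), sq_abs (y₁ - y₂), abs_nonneg (x₁ - x₂), abs_nonneg (y₁ - y₂)]

theorem hausdorffMeasure_segment_pt_le (x₁ y₁ x₂ y₂ : ℝ) :
    μH[1] (segment ℝ (pt x₁ y₁) (pt x₂ y₂)) ≤ ENNReal.ofReal (|x₁ - x₂| + |y₁ - y₂|) := by
  rw [hausdorffMeasure_segment, edist_dist]
  exact ENNReal.ofReal_le_ofReal (dist_pt_le ..)

theorem hausdorffMeasure_segment_pt (x₁ x₂ y : ℝ) :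
    μH[1] (segment ℝ (pt x₁ y) (pt x₂ y)) = ENNReal.ofReal |x₁ - x₂| := by
  rw [hausdorffMeasure_segment, edist_dist, dist_pt, sub_self, zero_pow two_ne_zero, add_zero,
    Real.sqrt_sq_eq_abs]

theorem isClosed_segment {E : Type*} [NormedAddCommGroup E] [NormedSpace ℝ E] (x y : E) :
    IsClosed (segment ℝ x y) := by
  rw [← convexHull_pair]
  exact (Finite.isCompact_convexHull ℝ (toFinite _)).isClosed

/-- The trapezoid with vertices `(0,0)`, `(1,1)`, `(a,1)`, `(b,0)`. -/
def trapezoid (a b : ℝ) : Set ℝ² :=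
  {p | 0 ≤ p 1 ∧ p 1 ≤ 1 ∧ p 1 ≤ p 0 ∧ p 0 ≤ b + (a - b) * p 1}

section Trapezoid

variable {a b : ℝ}

theorem convex_trapezoid (a b : ℝ) : Convex ℝ (trapezoid a b) := by
  rintro p ⟨hp₁, hp₂, hp₃, hp₄⟩ q ⟨hq₁, hq₂, hq₃, hq₄⟩ s t hs ht hst
  simp only [trapezoid, mem_ofPred_eq, PiLp.add_apply, PiLp.smul_apply, smul_eq_mul]
  refine ⟨by positivity, by nlinarith, by nlinarith, ?_⟩
  linear_combination mul_le_mul_of_nonneg_left hp₄ hs + mul_le_mul_of_nonneg_left hq₄ ht + b * hst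

theorem isClosed_trapezoid (a b : ℝ) : IsClosed (trapezoid a b) := by
  simp only [trapezoid, ofPred_and]
  refine .inter ?_ (.inter ?_ (.inter ?_ ?_)) <;> exact isClosed_le (by fun_prop) (by fun_prop)

theorem trapezoid_subset {s : Set ℝ²} (hs : Convex ℝ s) (h₀ : pt 0 0 ∈ s) (h₁ : pt 1 1 ∈ s)
    (ha : pt a 1 ∈ s) (hb : pt b 0 ∈ s) : trapezoid a b ⊆ s := by
  rintro p ⟨hp₁, hp₂, hp₃, hp₄⟩
  have hl : pt (p 1) (p 1) ∈ s :=
    hs.segment_subset h₀ h₁ (mem_segment_pt ⟨hp₁, hp₂⟩ (by simp) (by simp))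
  have hr : pt (b + (a - b) * p 1) (p 1) ∈ s :=
    hs.segment_subset hb ha (mem_segment_pt ⟨hp₁, hp₂⟩ (by simp; ring) (by simp))
  exact hs.segment_subset hl hr (mem_segment_pt_of_apply_one_eq (by simpa using ⟨hp₃, hp₄⟩) rfl)

theorem frontier_trapezoid_subset :
    frontier (trapezoid a b) ⊆ segment ℝ (pt 0 0) (pt b 0) ∪ segment ℝ (pt 1 1) (pt a 1) ∪
      segment ℝ (pt 0 0) (pt 1 1) ∪ segment ℝ (pt b 0) (pt a 1) := by
  have hinterior : {p : ℝ² | 0 < p 1 ∧ p 1 < 1 ∧ p 1 < p 0 ∧ p 0 < b + (a - b) * p 1} ⊆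
      interior (trapezoid a b) := by
    refine interior_maximal (fun p hp => ⟨hp.1.le, hp.2.1.le, hp.2.2.1.le, hp.2.2.2.le⟩) ?_
    simp only [ofPred_and]
    refine .inter ?_ (.inter ?_ (.inter ?_ ?_)) <;> exact isOpen_lt (by fun_prop) (by fun_prop)
  rw [(isClosed_trapezoid a b).frontier_eq]
  rintro p ⟨⟨h₁, h₂, h₃, h₄⟩, hp⟩
  rcases h₁.eq_or_lt with h₁ | h₁
  · exact .inl <| .inl <| .inl <| mem_segment_pt_of_apply_one_eq ⟨by linarith, by
      rw [← h₁] at h₄; linarith⟩ h₁.symm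
  rcases h₂.eq_or_lt with h₂ | h₂
  · exact .inl <| .inl <| .inr <| mem_segment_pt_of_apply_one_eq ⟨by linarith, by
      rw [h₂] at h₄; linarith⟩ h₂
  rcases h₃.eq_or_lt with h₃ | h₃
  · exact .inl <| .inr <| mem_segment_pt ⟨h₁.le, h₂.le⟩ (by rw [← h₃]; ring) (by ring)
  rcases h₄.eq_or_lt with h₄ | h₄
  · exact .inr <| mem_segment_pt ⟨h₁.le, h₂.le⟩ (by rw [h₄]; ring) (by ring)
  exact absurd (hinterior ⟨h₁, h₂, h₃, h₄⟩) hp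

theorem interior_trapezoid_subset : interior (trapezoid a b) ⊆ {p : ℝ² | p 1 ∈ Ioo 0 1} := by
  set f : ℝ² →L[ℝ] ℝ := EuclideanSpace.proj 1
  have hf : IsOpenMap f := f.isOpenMap fun y => ⟨pt 0 y, by simp [f]⟩
  calc interior (trapezoid a b) ⊆ interior (f ⁻¹' Icc 0 1) :=
        interior_mono fun p hp => ⟨hp.1, hp.2.1⟩
    _ = f ⁻¹' Ioo 0 1 := by rw [← hf.preimage_interior_eq_interior_preimage f.continuous,
        interior_Icc]

variable (ha : 1 ≤ a) (hb : 0 ≤ b)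
include ha hb

theorem segment_union_segment_subset_frontier_trapezoid :
    segment ℝ (pt 0 0) (pt b 0) ∪ segment ℝ (pt 1 1) (pt a 1) ⊆ frontier (trapezoid a b) := by
  have hmem : ∀ {x y : ℝ}, y ∈ Icc (0 : ℝ) 1 → y ≤ x → x ≤ b + (a - b) * y →
      pt x y ∈ trapezoid a b := fun hy h₁ h₂ => ⟨hy.1, hy.2, h₁, h₂⟩
  have h₀ := hmem (x := 0) (y := 0) (by simp) le_rfl (by simpa using hb)
  have h₁ := hmem (x := 1) (y := 1) (by simp) le_rfl (by linarith)
  have h₂ := hmem (x := a) (y := 1) (by simp) ha (by linarith)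
  have h₃ := hmem (x := b) (y := 0) (by simp) hb (by linarith)
  rw [(isClosed_trapezoid a b).frontier_eq]
  rintro p (hp | hp)
  · refine ⟨(convex_trapezoid a b).segment_subset h₀ h₃ hp, fun hint => ?_⟩
    have := interior_trapezoid_subset hint
    simp [apply_one_eq_of_mem_segment hp] at this
  · refine ⟨(convex_trapezoid a b).segment_subset h₁ h₂ hp, fun hint => ?_⟩
    have := interior_trapezoid_subset hint
    simp [apply_one_eq_of_mem_segment hp] at this

theorem hausdorffMeasure_frontier_trapezoid_le :
    μH[1] (frontier (trapezoid a b)) ≤ ENNReal.ofReal (b + a + 2 + |a - b|) := by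
  calc μH[1] (frontier (trapezoid a b))
      ≤ μH[1] (segment ℝ (pt 0 0) (pt b 0)) + μH[1] (segment ℝ (pt 1 1) (pt a 1)) +
          μH[1] (segment ℝ (pt 0 0) (pt 1 1)) + μH[1] (segment ℝ (pt b 0) (pt a 1)) :=
        (measure_mono frontier_trapezoid_subset).trans <| (measure_union_le _ _).trans <| by
          gcongr
          exact (measure_union_le _ _).trans (by gcongr; exact measure_union_le _ _)
    _ ≤ ENNReal.ofReal (|0 - b| + |0 - 0|) + ENNReal.ofReal (|1 - a| + |1 - 1|) +
          ENNReal.ofReal (|0 - 1| + |0 - 1|) + ENNReal.ofReal (|b - a| + |0 - 1|) := by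
        gcongr <;> apply hausdorffMeasure_segment_pt_le
    _ = ENNReal.ofReal (b + a + 2 + |a - b|) := by
        rw [← ENNReal.ofReal_add (by positivity) (by positivity),
          ← ENNReal.ofReal_add (by positivity) (by positivity),
          ← ENNReal.ofReal_add (by positivity) (by positivity)]
        congr 1
        rw [abs_sub_comm b a, abs_of_nonpos (by linarith : 0 - b ≤ 0),
          abs_of_nonpos (by linarith : 1 - a ≤ 0)]
        norm_num
        ring

theorem ofReal_le_hausdorffMeasure_frontier_trapezoid :
    ENNReal.ofReal (b + (a - 1)) ≤ μH[1] (frontier (trapezoid a b)) := by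
  have hdisj : Disjoint (segment ℝ (pt 0 0) (pt b 0)) (segment ℝ (pt 1 1) (pt a 1)) :=
    disjoint_left.mpr fun p h₀ h₁ => by
      have := (apply_one_eq_of_mem_segment h₀).symm.trans (apply_one_eq_of_mem_segment h₁)
      norm_num at this
  calc ENNReal.ofReal (b + (a - 1))
      = μH[1] (segment ℝ (pt 0 0) (pt b 0) ∪ segment ℝ (pt 1 1) (pt a 1)) := by
        rw [measure_union hdisj (isClosed_segment _ _).measurableSet,
          hausdorffMeasure_segment_pt, hausdorffMeasure_segment_pt,
          ← ENNReal.ofReal_add (abs_nonneg _) (abs_nonneg _),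
          abs_of_nonpos (by linarith : 0 - b ≤ 0), abs_of_nonpos (by linarith : 1 - a ≤ 0)]
        ring_nf
    _ ≤ μH[1] (frontier (trapezoid a b)) :=
        measure_mono (segment_union_segment_subset_frontier_trapezoid ha hb)

end Trapezoid

theorem polyCurve_subset {u : ℕ → ℝ} {N : ℕ} {s : Set ℝ²} (hs : Convex ℝ s)
    (h : ∀ i ≤ N, pt i (u i) ∈ s) : polyCurve u N ⊆ s := by
  refine iUnion₂_subset fun i hi => hs.segment_subset (h i ?_) ?_
  · exact (Finset.mem_range.mp hi).le
  · exact_mod_cast h (i + 1) (Finset.mem_range.mp hi)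

theorem pt_mem_polyCurve (u : ℕ → ℝ) {N i : ℕ} (hN : 0 < N) (hi : i ≤ N) :
    pt i (u i) ∈ polyCurve u N := by
  rcases hi.lt_or_eq with hi | rfl
  · exact mem_biUnion (Finset.mem_range.mpr hi) (left_mem_segment _ _ _)
  · obtain ⟨k, rfl⟩ := Nat.exists_eq_add_one_of_ne_zero hN.ne'
    rw [polyCurve, Nat.cast_add_one]
    exact mem_biUnion (Finset.mem_range.mpr k.lt_add_one) (right_mem_segment _ _ _)

/-- The last index `i ≤ N` with `u i = v` (or `0` if there is none). -/
def lastIndexOf (u : ℕ → ℝ) (v : ℝ) (N : ℕ) : ℕ := Nat.findGreatest (fun i => u i = v) N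

section lastIndexOf

theorem lastIndexOf_le (u : ℕ → ℝ) (v : ℝ) (N : ℕ) : lastIndexOf u v N ≤ N :=
  Nat.findGreatest_le N

variable {u : ℕ → ℝ} {v : ℝ} {N i : ℕ}

theorem le_lastIndexOf (hi : i ≤ N) (h : u i = v) : i ≤ lastIndexOf u v N :=
  Nat.le_findGreatest (P := (u · = v)) hi h

theorem apply_lastIndexOf (hi : i ≤ N) (h : u i = v) : u (lastIndexOf u v N) = v :=
  Nat.findGreatest_spec (P := (u · = v)) hi h

end lastIndexOf

section BinaryCurve

variable {u : ℕ → ℝ} (hu : ∀ n, u n = 0 ∨ u n = 1) (h₀ : u 0 = 0) (h₁ : u 1 = 1) {N : ℕ}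
  (hN : 0 < N)
include hu h₀ h₁ hN

theorem convexHull_polyCurve :
    convexHull ℝ (polyCurve u N) = trapezoid (lastIndexOf u 1 N) (lastIndexOf u 0 N) := by
  have hvertex : ∀ i ≤ N, pt i (u i) ∈ convexHull ℝ (polyCurve u N) :=
    fun i hi => subset_convexHull ℝ _ (pt_mem_polyCurve u hN hi)
  refine (convexHull_min (polyCurve_subset (convex_trapezoid _ _) fun i hi => ?_)
    (convex_trapezoid _ _)).antisymm
    (trapezoid_subset (convex_convexHull ℝ _) ?_ ?_ ?_ ?_)
  · rcases hu i with h | h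
    · simpa [trapezoid, h] using le_lastIndexOf hi h
    · have hi₁ : 1 ≤ i := Nat.one_le_iff_ne_zero.mpr fun h' => by simp [h', h₀] at h
      simpa [trapezoid, h] using ⟨hi₁, le_lastIndexOf hi h⟩
  · simpa [h₀] using hvertex 0 (Nat.zero_le N)
  · simpa [h₁] using hvertex 1 hN
  · simpa [apply_lastIndexOf hN h₁] using hvertex _ (lastIndexOf_le u 1 N)
  · simpa [apply_lastIndexOf (Nat.zero_le N) h₀] using hvertex _ (lastIndexOf_le u 0 N)

theorem polyDelta_le :
    polyDelta u N ≤ lastIndexOf u 0 N + lastIndexOf u 1 N + 2 +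
      |(lastIndexOf u 1 N : ℝ) - lastIndexOf u 0 N| := by
  rw [polyDelta, convexHull_polyCurve hu h₀ h₁ hN]
  exact ENNReal.toReal_le_of_le_ofReal (by positivity) <| hausdorffMeasure_frontier_trapezoid_le
    (by exact_mod_cast le_lastIndexOf hN h₁) (Nat.cast_nonneg _)

theorem le_polyDelta :
    (lastIndexOf u 0 N : ℝ) + (lastIndexOf u 1 N - 1) ≤ polyDelta u N := by
  have ha : (1 : ℝ) ≤ lastIndexOf u 1 N := by exact_mod_cast le_lastIndexOf hN h₁
  rw [polyDelta, convexHull_polyCurve hu h₀ h₁ hN, ← ENNReal.ofReal_le_iff_le_toReal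
    (ne_top_of_le_ne_top ENNReal.ofReal_ne_top (hausdorffMeasure_frontier_trapezoid_le ha
      (Nat.cast_nonneg _)))]
  exact ofReal_le_hausdorffMeasure_frontier_trapezoid ha (Nat.cast_nonneg _)

end BinaryCurve

theorem le_lastIndexOf_add_two {u : ℕ → ℝ} (hu : ∀ n, u n = 0 ∨ u n = 1)
    (hchange : ∀ n, u n ≠ u (n + 1) ∨ u (n + 1) ≠ u (n + 2)) {v : ℝ} (hv : v = 0 ∨ v = 1)
    (N : ℕ) : N ≤ lastIndexOf u v N + 2 := by
  rcases Nat.lt_or_ge N 2 with hN | hN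
  · omega
  obtain ⟨k, rfl⟩ := Nat.exists_eq_add_of_le' hN
  have hk : ∃ i, k ≤ i ∧ i ≤ k + 2 ∧ u i = v := by
    by_contra! hne
    have h₀ := hne k le_rfl (by omega)
    have h₁ := hne (k + 1) (by omega) (by omega)
    have h₂ := hne (k + 2) (by omega) le_rfl
    rcases hchange k with h | h <;> apply h <;>
      rcases hv with rfl | rfl <;> grind
  obtain ⟨i, hki, hik, hi⟩ := hk
  have := le_lastIndexOf hik hi
  omega

theorem tendsto_polyIncon {u : ℕ → ℝ} {L D : ℝ}
    (hL : Tendsto (fun N => polyLength u N / N) atTop (𝓝 L))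
    (hD : Tendsto (fun N => polyDelta u N / N) atTop (𝓝 D)) (hD₀ : D ≠ 0) :
    Tendsto (polyIncon u) atTop (𝓝 (2 * L / D)) := by
  refine ((hL.const_mul 2).div hD hD₀).congr' ?_
  filter_upwards [eventually_ne_atTop 0] with N hN
  rw [Pi.div_apply, polyIncon, ← mul_div_assoc,
    div_div_div_cancel_right₀ (Nat.cast_ne_zero.mpr hN)]

theorem thueMorse_two_mul (n : ℕ) : thueMorse (2 * n) = thueMorse n := by
  rcases Nat.eq_zero_or_pos n with rfl | hn
  · rfl
  · simp [thueMorse, Nat.digits_def' one_lt_two (by omega : 0 < 2 * n)]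

theorem thueMorse_two_mul_add_one (n : ℕ) : thueMorse (2 * n + 1) = 1 - thueMorse n := by
  simp only [thueMorse, Nat.digits_def' one_lt_two (Nat.succ_pos _), List.sum_cons]
  rw [show (2 * n + 1) % 2 = 1 by omega, show (2 * n + 1) / 2 = n by omega]
  rcases Nat.mod_two_eq_zero_or_one (Nat.digits 2 n).sum with h | h <;>
    simp [Nat.add_mod, h]

theorem thueMorse_eq_zero_or_eq_one (n : ℕ) : thueMorse n = 0 ∨ thueMorse n = 1 := by
  rcases Nat.mod_two_eq_zero_or_one (Nat.digits 2 n).sum with h | h <;> simp [thueMorse, h]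

theorem thueMorse_zero : thueMorse 0 = 0 := by simp [thueMorse]

theorem thueMorse_one : thueMorse 1 = 1 := by simp [thueMorse]

theorem onesCount_thueMorse_two_mul (M : ℕ) : onesCount thueMorse (2 * M) = M := by
  induction M with
  | zero => simp [onesCount]
  | succ M ih =>
    rw [onesCount, show 2 * (M + 1) = 2 * M + 1 + 1 by ring, Finset.sum_range_succ,
      Finset.sum_range_succ, ← onesCount, ih, thueMorse_two_mul_add_one, thueMorse_two_mul]
    push_cast
    ring

theorem tendsto_onesCount_thueMorse :
    Tendsto (fun N => onesCount thueMorse N / N) atTop (𝓝 (1 / 2)) := by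
  refine tendsto_div_of_abs_sub_le (g := fun _ => 1 / 2) (.of_forall fun N => ?_)
    (tendsto_const_div_atTop_nhds_zero_nat _)
  obtain ⟨M, rfl | rfl⟩ := Nat.even_or_odd' N
  · rw [onesCount_thueMorse_two_mul]
    push_cast
    rw [abs_le]; constructor <;> linarith
  · rw [onesCount, Finset.sum_range_succ, ← onesCount, onesCount_thueMorse_two_mul,
      thueMorse_two_mul]
    push_cast
    rcases thueMorse_eq_zero_or_eq_one M with h | h <;> rw [h, abs_le] <;> constructor <;> linarith

theorem changeCount_thueMorse_add_div_two (N : ℕ) :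
    changeCount thueMorse N + changeCount thueMorse (N / 2) = N := by
  have heven : ∀ M, changeCount thueMorse (2 * M) + changeCount thueMorse M = 2 * M := by
    intro M
    induction M with
    | zero => simp [changeCount]
    | succ M ih =>
      rw [changeCount, show 2 * (M + 1) = 2 * M + 1 + 1 by ring, Finset.sum_range_succ,
        Finset.sum_range_succ, changeCount, Finset.sum_range_succ, ← changeCount, ← changeCount]
      rw [show 2 * M + 1 + 1 = 2 * (M + 1) by ring, thueMorse_two_mul_add_one, thueMorse_two_mul,
        thueMorse_two_mul]
      push_cast
      rcases thueMorse_eq_zero_or_eq_one M with h | h <;>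
        rcases thueMorse_eq_zero_or_eq_one (M + 1) with h' | h' <;>
        rw [h, h'] <;> linarith
  obtain ⟨M, rfl | rfl⟩ := Nat.even_or_odd' N
  · rw [Nat.mul_div_cancel_left M two_pos, heven]
    push_cast; ring
  · rw [show (2 * M + 1) / 2 = M by omega, changeCount, Finset.sum_range_succ, ← changeCount,
      thueMorse_two_mul_add_one, thueMorse_two_mul, add_right_comm, heven]
    rcases thueMorse_eq_zero_or_eq_one M with h | h <;> rw [h] <;> push_cast <;> ring

theorem thueMorse_ne_succ_or_succ_ne (n : ℕ) :
    thueMorse n ≠ thueMorse (n + 1) ∨ thueMorse (n + 1) ≠ thueMorse (n + 2) := by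
  obtain ⟨k, rfl | rfl⟩ := Nat.even_or_odd' n
  · left
    rw [thueMorse_two_mul_add_one, thueMorse_two_mul]
    rcases thueMorse_eq_zero_or_eq_one k with h | h <;> norm_num [h]
  · right
    rw [show 2 * k + 1 + 1 = 2 * (k + 1) by ring, show 2 * k + 1 + 2 = 2 * (k + 1) + 1 by ring,
      thueMorse_two_mul_add_one, thueMorse_two_mul]
    rcases thueMorse_eq_zero_or_eq_one (k + 1) with h | h <;> norm_num [h]

theorem tendsto_polyDelta_thueMorse_div :
    Tendsto (fun N => polyDelta thueMorse N / N) atTop (𝓝 2) := by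
  refine tendsto_div_of_abs_sub_le (g := fun _ => 5) ?_ (tendsto_const_div_atTop_nhds_zero_nat _)
  filter_upwards [eventually_gt_atTop 0] with N hN
  have hlast : ∀ v : ℝ, v = 0 ∨ v = 1 →
      (N : ℝ) ≤ lastIndexOf thueMorse v N + 2 ∧ (lastIndexOf thueMorse v N : ℝ) ≤ N :=
    fun v hv => by
      have := le_lastIndexOf_add_two thueMorse_eq_zero_or_eq_one thueMorse_ne_succ_or_succ_ne hv N
      exact ⟨by exact_mod_cast this, by exact_mod_cast lastIndexOf_le ..⟩
  have h₀ := hlast 0 (.inl rfl)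
  have h₁ := hlast 1 (.inr rfl)
  have hupper := polyDelta_le thueMorse_eq_zero_or_eq_one thueMorse_zero thueMorse_one hN
  have hlower := le_polyDelta thueMorse_eq_zero_or_eq_one thueMorse_zero thueMorse_one hN
  have hab : |(lastIndexOf thueMorse 1 N : ℝ) - lastIndexOf thueMorse 0 N| ≤ 2 :=
    abs_sub_le_iff.mpr ⟨by linarith, by linarith⟩
  rw [abs_le]
  constructor <;> linarith

/-- For the Thue–Morse sequence: (i) the frequencies of the length-2 blocks exist and
satisfy `F₀₀ = F₁₁ = 1/6`, `F₀₁ = F₁₀ = 1/3`; (ii) the inconstancy of the sequence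
exists and equals `(1 + 2√2)/3`. -/
theorem polyIncon_thueMorse :
    Tendsto (fun N : ℕ => (blockCount thueMorse N 0 0 : ℝ) / N) atTop (nhds (1 / 6)) ∧
    Tendsto (fun N : ℕ => (blockCount thueMorse N 1 1 : ℝ) / N) atTop (nhds (1 / 6)) ∧
    Tendsto (fun N : ℕ => (blockCount thueMorse N 0 1 : ℝ) / N) atTop (nhds (1 / 3)) ∧
    Tendsto (fun N : ℕ => (blockCount thueMorse N 1 0 : ℝ) / N) atTop (nhds (1 / 3)) ∧
    Tendsto (fun N : ℕ => polyIncon thueMorse N) atTop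
      (nhds ((1 + 2 * Real.sqrt 2) / 3)) := by
  have hu := thueMorse_eq_zero_or_eq_one
  have hd := tendsto_div_of_add_div_two changeCount_thueMorse_add_div_two
  have hs := tendsto_onesCount_thueMorse
  refine ⟨?_, ?_, ?_, ?_, ?_⟩
  · convert tendsto_blockCount_zero_zero hu hd hs using 2; norm_num
  · convert tendsto_blockCount_one_one hu hd hs using 2; norm_num
  · convert tendsto_blockCount_zero_one hu hd hs using 2; norm_num
  · convert tendsto_blockCount_one_zero hu hd hs using 2; norm_num
  · convert tendsto_polyIncon (tendsto_polyLength_div hu hd) tendsto_polyDelta_thueMorse_div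
      two_ne_zero using 2
    ring
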